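/- arXiv:1212.3904 — 8 statements merged into one kernel-verified Lean document; each statement's English description precedes it below -/
import Mathlib

section
/- If a left-symmetric algebra A satisfies any two of the three identities (N): (x·y)·z = (x·z)·y, (D): (x·y)·z = (z·y)·x, and (E): (x·y)·z = (y·x)·z, for all x,y,z ∈ A, then it satisfies the third identity as well. -/
/-!
Each identity is a permutation rule for the factors of a product `(x*y)*z`: (N) swaps the
last two factors, (E) the first two and (D) the outer two. Any two of these transpositions
compose to the third, so the implications hold in every magma.
-/

section Magma

variable {A : Type*} [Mul A]

theorem mul_swap_left_of_right_comm_of_outer_swap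
    (hN : ∀ x y z : A, (x*y)*z = (x*z)*y) (hD : ∀ x y z : A, (x*y)*z = (z*y)*x)
    (x y z : A) : (x*y)*z = (y*x)*z := by
  rw [hN x y z, hD x z y, hN y z x]

theorem mul_outer_swap_of_right_comm_of_swap_left
    (hN : ∀ x y z : A, (x*y)*z = (x*z)*y) (hE : ∀ x y z : A, (x*y)*z = (y*x)*z)
    (x y z : A) : (x*y)*z = (z*y)*x := by
  rw [hN x y z, hE x z y, hN z x y]

theorem mul_right_comm_of_outer_swap_of_swap_left
    (hD : ∀ x y z : A, (x*y)*z = (z*y)*x) (hE : ∀ x y z : A, (x*y)*z = (y*x)*z)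
    (x y z : A) : (x*y)*z = (x*z)*y := by
  rw [hD x y z, hE z y x, hD y z x]

end Magma

theorem lsa_two_of_three_general {A : Type*} [NonUnitalNonAssocRing A] :
    ((∀ x y z : A, (x*y)*z = (x*z)*y) → (∀ x y z : A, (x*y)*z = (z*y)*x) →
        (∀ x y z : A, (x*y)*z = (y*x)*z)) ∧
    ((∀ x y z : A, (x*y)*z = (x*z)*y) → (∀ x y z : A, (x*y)*z = (y*x)*z) →
        (∀ x y z : A, (x*y)*z = (z*y)*x)) ∧
    ((∀ x y z : A, (x*y)*z = (z*y)*x) → (∀ x y z : A, (x*y)*z = (y*x)*z) →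
        (∀ x y z : A, (x*y)*z = (x*z)*y)) :=
  ⟨mul_swap_left_of_right_comm_of_outer_swap, mul_outer_swap_of_right_comm_of_swap_left,
    mul_right_comm_of_outer_swap_of_swap_left⟩

/-- For a left-symmetric algebra, any two of the identities
(N) `(x*y)*z = (x*z)*y`, (D) `(x*y)*z = (z*y)*x`, (E) `(x*y)*z = (y*x)*z`
imply the third. -/
theorem lsa_two_of_three {F A : Type*} [Field F] [NonUnitalNonAssocRing A]
    [Module F A] [SMulCommClass F A A] [IsScalarTower F A A]
    (hls : ∀ x y z : A, (x*y)*z - x*(y*z) = (y*x)*z - y*(x*z)) :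
    ((∀ x y z : A, (x*y)*z = (x*z)*y) → (∀ x y z : A, (x*y)*z = (z*y)*x) →
        (∀ x y z : A, (x*y)*z = (y*x)*z)) ∧
    ((∀ x y z : A, (x*y)*z = (x*z)*y) → (∀ x y z : A, (x*y)*z = (y*x)*z) →
        (∀ x y z : A, (x*y)*z = (z*y)*x)) ∧
    ((∀ x y z : A, (x*y)*z = (z*y)*x) → (∀ x y z : A, (x*y)*z = (y*x)*z) →
        (∀ x y z : A, (x*y)*z = (x*z)*y)) :=
  lsa_two_of_three_general
end

section
/- If a Lie algebra G admits a compatible associative product (an associative product with x·y - y·x = [x,y]) that is Novikov (i.e., (x·y)·z = (x·z)·y), then G is 2-step solvable. -/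
/-!
By associativity and the Novikov identity, `x·[y,z] = (x·y)·z - (x·z)·y = 0`, so every left
multiplication kills `[G,G]`. For `a, b ∈ [G,G]` this gives `[a,b] = a·b - b·a = 0`.
-/

theorem LieAlgebra.derivedSeries_one_le_ker {R L M : Type*} [CommRing R] [LieRing L]
    [LieAlgebra R L] [AddCommGroup M] [Module R M] (f : L →ₗ[R] M)
    (hf : ∀ x y : L, f ⁅x, y⁆ = 0) :
    (derivedSeries R L 1 : Submodule R L) ≤ LinearMap.ker f := by
  rw [coe_derivedSeries_one_eq, Submodule.span_le]
  rintro _ ⟨x, y, rfl⟩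
  exact hf x y

theorem mul_lie_eq_zero_of_assoc_of_novikov {R L : Type*} [CommRing R] [LieRing L]
    [LieAlgebra R L] (mul : L →ₗ[R] L →ₗ[R] L)
    (hassoc : ∀ x y z : L, mul (mul x y) z = mul x (mul y z))
    (hcompat : ∀ x y : L, mul x y - mul y x = ⁅x, y⁆)
    (hnov : ∀ x y z : L, mul (mul x y) z = mul (mul x z) y) (x y z : L) :
    mul x ⁅y, z⁆ = 0 := by
  rw [← hcompat, map_sub, ← hassoc, ← hassoc, hnov, sub_self]

/-- A Lie algebra admitting a compatible associative Novikov product is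
2-step solvable. -/
theorem novikov_assoc_two_step_solvable {F G : Type*} [Field F] [LieRing G]
    [LieAlgebra F G] (mul : G →ₗ[F] G →ₗ[F] G)
    (hassoc : ∀ x y z : G, mul (mul x y) z = mul x (mul y z))
    (hcompat : ∀ x y : G, mul x y - mul y x = ⁅x, y⁆)
    (hnov : ∀ x y z : G, mul (mul x y) z = mul (mul x z) y) :
    LieAlgebra.derivedSeries F G 2 = ⊥ := by
  have hkill : ∀ x, ∀ a ∈ LieAlgebra.derivedSeries F G 1, mul x a = 0 := fun x _ ha =>
    LieAlgebra.derivedSeries_one_le_ker (mul x)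
      (mul_lie_eq_zero_of_assoc_of_novikov mul hassoc hcompat hnov x) ha
  rw [LieAlgebra.derivedSeries_def, LieAlgebra.derivedSeriesOfIdeal_succ,
    LieSubmodule.lie_eq_bot_iff]
  intro a ha b hb
  rw [← hcompat, hkill a b hb, hkill b a ha, sub_zero]
end

section
/- Let A be a left-symmetric algebra and let Z_Lie = {z ∈ A : [z,x] = 0 for all x ∈ A} be the center of the associated Lie algebra. Then for every z ∈ Z_Lie and x,y ∈ A, the associator (x,y,z) = (x·y)·z - x·(y·z) vanishes. Consequently, the algebra center Z(A) equals {z ∈ Z_Lie : (z,x,y) = 0 for all x,y ∈ A}. -/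
theorem associator_eq_zero_of_forall_commute {A : Type*} [NonUnitalNonAssocRing A]
    (hls : ∀ x y z : A, associator x y z = associator y x z) {z : A} (hz : ∀ x, Commute z x)
    (x y : A) : associator x y z = 0 := by
  -- left symmetry at `(z, x, y)`, where `z * x = x * z` cancels the first terms
  have hzxy : z * (x * y) = x * (z * y) := by
    simpa only [associator_apply, (hz x).eq, sub_right_inj] using hls z x y
  rw [associator_apply, ← (hz (x * y)).eq, ← (hz y).eq, hzxy, sub_self]

theorem lsa_center_characterization_general {A : Type*} [NonUnitalNonAssocRing A]
    (hls : ∀ x y z : A, (x*y)*z - x*(y*z) = (y*x)*z - y*(x*z)) :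
    (∀ z : A, (∀ x : A, z*x = x*z) → ∀ x y : A, (x*y)*z - x*(y*z) = 0) ∧
    ({z : A | (∀ x : A, z*x = x*z) ∧ ∀ x y : A,
        (z*x)*y - z*(x*y) = 0 ∧ (x*z)*y - x*(z*y) = 0 ∧ (x*y)*z - x*(y*z) = 0}
      = {z : A | (∀ x : A, z*x = x*z) ∧ ∀ x y : A, (z*x)*y - z*(x*y) = 0}) := by
  have right_zero : ∀ z : A, (∀ x : A, z*x = x*z) → ∀ x y : A, (x*y)*z - x*(y*z) = 0 :=
    fun z hz => associator_eq_zero_of_forall_commute hls hz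
  refine ⟨right_zero, Set.ext fun z => ⟨?_, ?_⟩⟩
  · rintro ⟨hz, h⟩
    exact ⟨hz, fun x y => (h x y).1⟩
  · rintro ⟨hz, h⟩
    exact ⟨hz, fun x y => ⟨h x y, (hls x z y).trans (h x y), right_zero z hz x y⟩⟩

/-- In a left-symmetric algebra, if `z` is in the center of the associated
Lie algebra then `(x,y,z) = 0` for all `x,y`; consequently the algebra center equals
`{z Lie-central : (z,x,y) = 0 for all x,y}`. -/
theorem lsa_center_characterization {F A : Type*} [Field F] [NonUnitalNonAssocRing A]
    [Module F A] [SMulCommClass F A A] [IsScalarTower F A A]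
    (hls : ∀ x y z : A, (x*y)*z - x*(y*z) = (y*x)*z - y*(x*z)) :
    (∀ z : A, (∀ x : A, z*x = x*z) → ∀ x y : A, (x*y)*z - x*(y*z) = 0) ∧
    ({z : A | (∀ x : A, z*x = x*z) ∧ ∀ x y : A,
        (z*x)*y - z*(x*y) = 0 ∧ (x*z)*y - x*(z*y) = 0 ∧ (x*y)*z - x*(y*z) = 0}
      = {z : A | (∀ x : A, z*x = x*z) ∧ ∀ x y : A, (z*x)*y - z*(x*y) = 0}) :=
  lsa_center_characterization_general hls
end

section
/- If A is a Novikov algebra, then every element z of the center of the associated Lie algebra satisfies (z,x,y) = 0 for all x,y ∈ A; hence the algebra center of A coincides with the Lie center of A. -/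
/-!
For a Lie-central `z`, right commutativity gives `(z x) y = (x z) y = (x y) z = z (x y)`, so the
associator vanishes with `z` in the first slot. Left symmetry moves `z` to the middle slot, and
right commutativity together with `z x = x z` identifies the last slot with the middle one.
-/

section Novikov

variable {A : Type*} [NonUnitalNonAssocRing A]

theorem isMulCentral_iff_forall_commute_and_associator_eq_zero {z : A} :
    IsMulCentral z ↔ (∀ x, Commute z x) ∧
      ∀ x y, associator z x y = 0 ∧ associator x z y = 0 ∧ associator x y z = 0 := by
  simp only [associator_apply, sub_eq_zero]
  refine ⟨fun h => ⟨h.comm, fun x y => ⟨(h.left_assoc x y).symm, h.mid_assoc x y,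
    h.right_assoc x y⟩⟩, fun ⟨hcomm, hassoc⟩ => ⟨hcomm, fun x y => (hassoc x y).1.symm,
    fun x y => (hassoc x y).2.2⟩⟩

variable (hright : ∀ x y z : A, x * y * z = x * z * y)
include hright

theorem associator_left_eq_zero_of_forall_commute {z : A} (hz : ∀ x, Commute z x) (x y : A) :
    associator z x y = 0 := by
  rw [associator_apply, (hz x).eq, hright x z y, ← (hz (x * y)).eq, sub_self]

theorem associator_right_eq_associator_mid_of_forall_commute {z : A} (hz : ∀ x, Commute z x)
    (x y : A) : associator x y z = associator x z y := by
  rw [associator_apply, associator_apply, hright x y z, (hz y).eq]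

theorem isMulCentral_iff_forall_commute
    (hleft : ∀ x y z : A, associator x y z = associator y x z) {z : A} :
    IsMulCentral z ↔ ∀ x, Commute z x := by
  refine isMulCentral_iff_forall_commute_and_associator_eq_zero.trans
    ⟨And.left, fun hz => ⟨hz, fun x y => ?_⟩⟩
  have hfirst := associator_left_eq_zero_of_forall_commute hright hz x y
  have hmid : associator x z y = 0 := (hleft x z y).trans hfirst
  exact ⟨hfirst, hmid,
    (associator_right_eq_associator_mid_of_forall_commute hright hz x y).trans hmid⟩

end Novikov

theorem novikov_center_eq_lie_center_general {A : Type*} [NonUnitalNonAssocRing A]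
    (hls : ∀ x y z : A, (x*y)*z - x*(y*z) = (y*x)*z - y*(x*z))
    (hN : ∀ x y z : A, (x*y)*z = (x*z)*y) :
    (∀ z : A, (∀ x : A, z*x = x*z) → ∀ x y : A, (z*x)*y - z*(x*y) = 0) ∧
    ({z : A | (∀ x : A, z*x = x*z) ∧ ∀ x y : A,
        (z*x)*y - z*(x*y) = 0 ∧ (x*z)*y - x*(z*y) = 0 ∧ (x*y)*z - x*(y*z) = 0}
      = {z : A | ∀ x : A, z*x = x*z}) := by
  refine ⟨fun z hz => associator_left_eq_zero_of_forall_commute hN hz, ?_⟩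
  ext z
  exact isMulCentral_iff_forall_commute_and_associator_eq_zero.symm.trans
    (isMulCentral_iff_forall_commute hN hls)

/-- In a Novikov algebra, every Lie-central element `z` satisfies
`(z,x,y) = 0`; hence the algebra center coincides with the Lie center. -/
theorem novikov_center_eq_lie_center {F A : Type*} [Field F] [NonUnitalNonAssocRing A]
    [Module F A] [SMulCommClass F A A] [IsScalarTower F A A]
    (hls : ∀ x y z : A, (x*y)*z - x*(y*z) = (y*x)*z - y*(x*z))
    (hN : ∀ x y z : A, (x*y)*z = (x*z)*y) :
    (∀ z : A, (∀ x : A, z*x = x*z) → ∀ x y : A, (z*x)*y - z*(x*y) = 0) ∧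
    ({z : A | (∀ x : A, z*x = x*z) ∧ ∀ x y : A,
        (z*x)*y - z*(x*y) = 0 ∧ (x*z)*y - x*(z*y) = 0 ∧ (x*y)*z - x*(y*z) = 0}
      = {z : A | ∀ x : A, z*x = x*z}) :=
  novikov_center_eq_lie_center_general hls hN
end

section
/- If A is a derivation algebra, then every element z of the center of the associated Lie algebra satisfies (z,x,y) = 0 for all x,y ∈ A; hence the algebra center of A coincides with the Lie center of A. -/
/-!
If `z` commutes with everything, the identity `(x * y) * z = (z * y) * x` lets one move `z` around
a product: `(z * x) * y = (x * z) * y = (y * z) * x = (z * y) * x = (x * y) * z = z * (x * y)`.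
So `(z, x, y) = 0`, left symmetry gives `(x, z, y) = 0`, and for a Lie-central `z` the third
associator `(x, y, z)` is the difference of these two.
-/

theorem mul_assoc_of_forall_commute {A : Type*} [Mul A]
    (hD : ∀ x y z : A, (x * y) * z = (z * y) * x) {z : A} (hz : ∀ x, z * x = x * z) (x y : A) :
    (z * x) * y = z * (x * y) :=
  calc (z * x) * y = (x * z) * y := by rw [hz x]
    _ = (y * z) * x := hD x z y
    _ = (z * y) * x := by rw [hz y]
    _ = (x * y) * z := (hD x y z).symm
    _ = z * (x * y) := (hz (x * y)).symm

section NonUnitalNonAssocRing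

variable {A : Type*} [NonUnitalNonAssocRing A] {z : A}

theorem associator_eq_sub_of_forall_commute (hz : ∀ x, z * x = x * z) (x y : A) :
    associator x y z = associator x z y - associator z x y := by
  simp only [associator_apply]
  rw [← hz (x * y), ← hz y, hz x]
  abel

end NonUnitalNonAssocRing

theorem derivation_center_eq_lie_center_general {A : Type*} [NonUnitalNonAssocRing A]
    (hls : ∀ x y z : A, (x*y)*z - x*(y*z) = (y*x)*z - y*(x*z))
    (hD : ∀ x y z : A, (x*y)*z = (z*y)*x) :
    (∀ z : A, (∀ x : A, z*x = x*z) → ∀ x y : A, (z*x)*y - z*(x*y) = 0) ∧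
    ({z : A | (∀ x : A, z*x = x*z) ∧ ∀ x y : A,
        (z*x)*y - z*(x*y) = 0 ∧ (x*z)*y - x*(z*y) = 0 ∧ (x*y)*z - x*(y*z) = 0}
      = {z : A | ∀ x : A, z*x = x*z}) := by
  have associator_left : ∀ z : A, (∀ x, z * x = x * z) → ∀ x y, associator z x y = 0 :=
    fun z hz x y => sub_eq_zero.mpr (mul_assoc_of_forall_commute hD hz x y)
  refine ⟨associator_left, ?_⟩
  ext z
  refine ⟨And.left, fun hz => ⟨hz, fun x y => ?_⟩⟩
  have hzxy : associator z x y = 0 := associator_left z hz x y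
  have hxzy : associator x z y = 0 := (hls x z y).trans hzxy
  have hxyz : associator x y z = 0 := by
    rw [associator_eq_sub_of_forall_commute hz, hxzy, hzxy, sub_zero]
  exact ⟨hzxy, hxzy, hxyz⟩

/-- In a derivation algebra, every Lie-central element `z` satisfies
`(z,x,y) = 0`; hence the algebra center coincides with the Lie center. -/
theorem derivation_center_eq_lie_center {F A : Type*} [Field F] [NonUnitalNonAssocRing A]
    [Module F A] [SMulCommClass F A A] [IsScalarTower F A A]
    (hls : ∀ x y z : A, (x*y)*z - x*(y*z) = (y*x)*z - y*(x*z))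
    (hD : ∀ x y z : A, (x*y)*z = (z*y)*x) :
    (∀ z : A, (∀ x : A, z*x = x*z) → ∀ x y : A, (z*x)*y - z*(x*y) = 0) ∧
    ({z : A | (∀ x : A, z*x = x*z) ∧ ∀ x y : A,
        (z*x)*y - z*(x*y) = 0 ∧ (x*z)*y - x*(z*y) = 0 ∧ (x*y)*z - x*(y*z) = 0}
      = {z : A | ∀ x : A, z*x = x*z}) :=
  derivation_center_eq_lie_center_general hls hD
end

section
/- If A is a Novikov algebra, then its center Z(A) (which equals the Lie center) is a two-sided ideal of A: for all x ∈ A and z ∈ Z(A), both x·z and z·x lie in Z(A). -/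
/-!
A central element `z` of a Novikov algebra associates with everything: right commutativity lets
`z` travel to the front, and left symmetry then moves it to the back. Together with
`(a*b)*z = (b*a)*z`, left symmetry applied to `(y, x, z)` gives `y*(x*z) = (x*y)*z = (x*z)*y`.
-/

section Novikov

variable {A : Type*} [NonUnitalNonAssocRing A]

theorem mul_assoc_of_central_left (hN : ∀ x y z : A, (x*y)*z = (x*z)*y) {z : A}
    (hz : ∀ x : A, z*x = x*z) (a b : A) : (z*a)*b = z*(a*b) := by
  rw [hz, hN, hz]

theorem mul_assoc_of_central_right (hls : ∀ x y z : A, (x*y)*z - x*(y*z) = (y*x)*z - y*(x*z))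
    (hN : ∀ x y z : A, (x*y)*z = (x*z)*y) {z : A} (hz : ∀ x : A, z*x = x*z) (a b : A) :
    (a*b)*z = a*(b*z) := by
  have h := hls a z b
  rw [mul_assoc_of_central_left hN hz, sub_self, sub_eq_zero] at h
  rw [hN, h, hz]

theorem mul_comm_mul_central (hN : ∀ x y z : A, (x*y)*z = (x*z)*y) {z : A}
    (hz : ∀ x : A, z*x = x*z) (a b : A) : (a*b)*z = (b*a)*z :=
  calc (a*b)*z = (z*a)*b := by rw [hN, hz]
    _ = (z*b)*a := hN z a b
    _ = (b*a)*z := by rw [hz, hN]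

theorem mul_central_comm (hls : ∀ x y z : A, (x*y)*z - x*(y*z) = (y*x)*z - y*(x*z))
    (hN : ∀ x y z : A, (x*y)*z = (x*z)*y) {z : A} (hz : ∀ x : A, z*x = x*z) (x y : A) :
    (x*z)*y = y*(x*z) := by
  have h := hls y x z
  rw [mul_comm_mul_central hN hz y x, ← mul_assoc_of_central_right hls hN hz x y, sub_self,
    sub_eq_zero] at h
  rw [← hN, h]

end Novikov

theorem novikov_center_is_ideal_general {A : Type*} [NonUnitalNonAssocRing A]
    (hls : ∀ x y z : A, (x*y)*z - x*(y*z) = (y*x)*z - y*(x*z))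
    (hN : ∀ x y z : A, (x*y)*z = (x*z)*y) :
    ∀ z : A, (∀ x : A, z*x = x*z) → ∀ x : A,
      (∀ y : A, (x*z)*y = y*(x*z)) ∧ (∀ y : A, (z*x)*y = y*(z*x)) := by
  intro z hz x
  exact ⟨mul_central_comm hls hN hz x, hz x ▸ mul_central_comm hls hN hz x⟩

/-- In a Novikov algebra, the center (= Lie center) is a two-sided ideal:
for central `z` and any `x`, both `x*z` and `z*x` are central. -/
theorem novikov_center_is_ideal {F A : Type*} [Field F] [NonUnitalNonAssocRing A]
    [Module F A] [SMulCommClass F A A] [IsScalarTower F A A]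
    (hls : ∀ x y z : A, (x*y)*z - x*(y*z) = (y*x)*z - y*(x*z))
    (hN : ∀ x y z : A, (x*y)*z = (x*z)*y) :
    ∀ z : A, (∀ x : A, z*x = x*z) → ∀ x : A,
      (∀ y : A, (x*z)*y = y*(x*z)) ∧ (∀ y : A, (z*x)*y = y*(z*x)) :=
  novikov_center_is_ideal_general hls hN
end

section
/- If A is a derivation algebra, then its center Z(A) (which equals the Lie center) is a two-sided ideal of A. -/
/-! For central `z`, left symmetry applied to `(y, z, x)` says that left multiplication by `z`
commutes with every left multiplication. The derivation identity turns `(z * x) * y` into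
`(y * x) * z = z * (y * x)`, and this is `y * (z * x)`; since `x * z = z * x`, both products
are central. -/

section

variable {A : Type*} [NonUnitalNonAssocRing A] {z : A}

theorem mul_mul_left_comm_of_forall_mul_comm
    (hls : ∀ x y z : A, (x*y)*z - x*(y*z) = (y*x)*z - y*(x*z))
    (hz : ∀ x : A, z * x = x * z) (x y : A) :
    y * (z * x) = z * (y * x) := by
  have h := hls y z x
  rw [hz y] at h
  exact sub_right_injective h

theorem forall_mul_comm_mul_right_of_forall_mul_comm
    (hls : ∀ x y z : A, (x*y)*z - x*(y*z) = (y*x)*z - y*(x*z))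
    (hD : ∀ x y z : A, (x*y)*z = (z*y)*x)
    (hz : ∀ x : A, z * x = x * z) (x y : A) :
    (z * x) * y = y * (z * x) :=
  calc (z * x) * y = (y * x) * z := (hD y x z).symm
    _ = z * (y * x) := (hz (y * x)).symm
    _ = y * (z * x) := (mul_mul_left_comm_of_forall_mul_comm hls hz x y).symm

end

theorem derivation_center_is_ideal_general {A : Type*} [NonUnitalNonAssocRing A]
    (hls : ∀ x y z : A, (x*y)*z - x*(y*z) = (y*x)*z - y*(x*z))
    (hD : ∀ x y z : A, (x*y)*z = (z*y)*x) :
    ∀ z : A, (∀ x : A, z*x = x*z) → ∀ x : A,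
      (∀ y : A, (x*z)*y = y*(x*z)) ∧ (∀ y : A, (z*x)*y = y*(z*x)) := by
  intro z hz x
  have hzx := forall_mul_comm_mul_right_of_forall_mul_comm hls hD hz x
  exact ⟨by simpa only [hz x] using hzx, hzx⟩

/-- In a derivation algebra, the center (= Lie center) is a two-sided ideal:
for central `z` and any `x`, both `x*z` and `z*x` are central. -/
theorem derivation_center_is_ideal {F A : Type*} [Field F] [NonUnitalNonAssocRing A]
    [Module F A] [SMulCommClass F A A] [IsScalarTower F A A]
    (hls : ∀ x y z : A, (x*y)*z - x*(y*z) = (y*x)*z - y*(x*z))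
    (hD : ∀ x y z : A, (x*y)*z = (z*y)*x) :
    ∀ z : A, (∀ x : A, z*x = x*z) → ∀ x : A,
      (∀ y : A, (x*z)*y = y*(x*z)) ∧ (∀ y : A, (z*x)*y = y*(z*x)) :=
  derivation_center_is_ideal_general hls hD
end

section
/- Let A be a left-symmetric algebra whose associated Lie algebra G_A is 2-step nilpotent ([A,[A,A]] = 0), and suppose there is a linear endomorphism f of A with x·y = [f(x), y] for all x,y, satisfying [x,y] = [f(x),y] + [x,f(y)] and f([x,y]) - [f(x),f(y)] ∈ Z(G_A) for all x,y. Then A satisfies [x,y]·z = 0 for all x,y,z. -/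
/-! Left-symmetry says exactly that `L_{[x,y]} = [L_x, L_y]` for the left multiplications `L`.
Since every `L_x` is the inner derivation `ad_{f x}`, the products `x * (y * z)` are double
brackets `[f x, [f y, z]]`, which vanish in a 2-step nilpotent Lie algebra. -/

section

variable {A : Type*} [NonUnitalNonAssocRing A]

theorem commutator_mul_of_leftSymmetric
    (hls : ∀ x y z : A, (x*y)*z - x*(y*z) = (y*x)*z - y*(x*z)) (x y z : A) :
    (x*y - y*x)*z = x*(y*z) - y*(x*z) := by
  rw [sub_mul]
  exact sub_eq_sub_iff_sub_eq_sub.mpr (hls x y z)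

theorem mul_mul_eq_zero_of_mul_eq_commutator
    (hnil : ∀ x y z : A, x*(y*z - z*y) - (y*z - z*y)*x = 0)
    (g : A → A) (hg : ∀ x y : A, x*y = g x * y - y * g x) (x y z : A) :
    x*(y*z) = 0 := by
  rw [hg x (y*z), hg y z]
  exact hnil (g x) (g y) z

end

theorem inner_derivation_two_step_nilpotent_E_general {F A : Type*} [Field F]
    [NonUnitalNonAssocRing A] [Module F A]
    (hls : ∀ x y z : A, (x*y)*z - x*(y*z) = (y*x)*z - y*(x*z))
    (hnil : ∀ x y z : A, x*(y*z - z*y) - (y*z - z*y)*x = 0)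
    (f : A →ₗ[F] A)
    (hf0 : ∀ x y : A, x*y = f x * y - y * f x) :
    ∀ x y z : A, (x*y - y*x)*z = 0 := by
  intro x y z
  rw [commutator_mul_of_leftSymmetric hls,
    mul_mul_eq_zero_of_mul_eq_commutator hnil f hf0,
    mul_mul_eq_zero_of_mul_eq_commutator hnil f hf0, sub_zero]

/-- An inner derivation algebra (left-symmetric, `x*y = [f x, y]` with the
stated conditions on `f`) whose associated Lie algebra is 2-step nilpotent satisfies
`[x,y]*z = 0`. -/
theorem inner_derivation_two_step_nilpotent_E {F A : Type*} [Field F]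
    [NonUnitalNonAssocRing A] [Module F A] [SMulCommClass F A A] [IsScalarTower F A A]
    (hls : ∀ x y z : A, (x*y)*z - x*(y*z) = (y*x)*z - y*(x*z))
    (hnil : ∀ x y z : A, x*(y*z - z*y) - (y*z - z*y)*x = 0)
    (f : A →ₗ[F] A)
    (hf0 : ∀ x y : A, x*y = f x * y - y * f x)
    (hf1 : ∀ x y : A, x*y - y*x = (f x * y - y * f x) + (x * f y - f y * x))
    (hf2 : ∀ x y w : A,
      (f (x*y - y*x) - (f x * f y - f y * f x)) * w
        = w * (f (x*y - y*x) - (f x * f y - f y * f x))) :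
    ∀ x y z : A, (x*y - y*x)*z = 0 :=
  inner_derivation_two_step_nilpotent_E_general hls hnil f hf0
end
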